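/- arXiv:1506.02172 — 3 statements merged into one kernel-verified Lean document; each statement's English description precedes it below -/
import Mathlib

section
/- Let D be a principal ideal domain, p ∈ D a prime element, A an n×n matrix over D with ℓ-th index set I_A^ℓ (for ℓ ≥ 0), and let ν_i ∈ D[X] be (p^i)-minimal polynomials of A. If f ∈ N_{(p^ℓ)}(A), then f ∈ Σ_{i ∈ I_A^ℓ[f]} p^{ℓ-i}·ν_i·D[X], where I_A^ℓ[f] = {i ∈ I_A^ℓ : deg(ν_i) ≤ deg(f)}. -/
/-- `f(A) ∈ d·M_n(D)`, i.e. `f` belongs to the `(d)`-ideal `N_{(d)}(A)` of the matrix `A`. -/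
def memNullDvd {D : Type*} [CommRing D] {n : ℕ} (A : Matrix (Fin n) (Fin n) D) (d : D)
    (f : Polynomial D) : Prop :=
  ∃ B : Matrix (Fin n) (Fin n) D, Polynomial.aeval A f = d • B

/-- `f` is a `(d)`-minimal polynomial of `A`: a monic polynomial in `N_{(d)}(A)` of minimal
degree among monic polynomials in `N_{(d)}(A)`. -/
def IsMinPolyMod {D : Type*} [CommRing D] {n : ℕ} (A : Matrix (Fin n) (Fin n) D) (d : D)
    (f : Polynomial D) : Prop :=
  f.Monic ∧ memNullDvd A d f ∧
    ∀ g : Polynomial D, g.Monic → memNullDvd A d g → f.degree ≤ g.degree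

/-- The `ℓ`-th index set of `A` with respect to `p`, computed from a choice `ν` of
`(p^i)`-minimal polynomials: `I_A^ℓ = {ℓ} ∪ {i : 0 ≤ i < ℓ, deg ν_i < deg ν_{i+1}}`. -/
def indexSet {D : Type*} [CommRing D] (ν : ℕ → Polynomial D) (ℓ : ℕ) : Finset ℕ :=
  insert ℓ ((Finset.range ℓ).filter fun i => (ν i).natDegree < (ν (i + 1)).natDegree)

/-!
Induction on `ℓ` and, for fixed `ℓ`, on `deg f`. If `j` is the largest index with
`deg ν_j ≤ deg f`, then `j ∈ I_A^ℓ`, and subtracting a multiple of `p^{ℓ-j}·ν_j` lowers the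
degree of `f` as soon as `p^{ℓ-j}` divides its leading coefficient. For `j < ℓ` this comes from
level `ℓ - 1`: there `f` only involves generators with `i ≤ j`, so `f = p^{ℓ-1-j}·g` with
`g ∈ N_{(p^{j+1})}(A)` and `deg g < deg ν_{j+1}`. If `p` did not divide the leading
coefficient of `g`, a Bézout combination of `g` and `p^{j+1}·X^{deg g}` would be a monic element
of `N_{(p^{j+1})}(A)` of degree `deg g`, contradicting the minimality of `ν_{j+1}`.
-/

open Polynomial

lemma Polynomial.exists_degree_sub_C_mul_mul_lt {R : Type*} [CommRing R] {a : R} {f w : R[X]}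
    (hw : w.Monic) (hwf : w.natDegree ≤ f.natDegree) (hf : f ≠ 0) (ha : a ∣ f.leadingCoeff) :
    ∃ q : R[X], (f - C a * w * q).degree < f.degree := by
  obtain ⟨b, hb⟩ := ha
  have : Nontrivial R := nontrivial_of_ne _ _ (leadingCoeff_ne_zero.2 hf)
  set e := f.natDegree - w.natDegree
  have hlead : C a * w * (C b * X ^ e) = C f.leadingCoeff * X ^ e * w := by
    rw [hb, C_mul]; ring
  refine ⟨C b * X ^ e, degree_sub_lt_left ?_ hf ?_⟩
  · rw [hlead, hw.degree_mul, degree_C_mul_X_pow e (leadingCoeff_ne_zero.2 hf),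
      degree_eq_natDegree hw.ne_zero, degree_eq_natDegree hf]
    norm_cast
    omega
  · rw [hlead, leadingCoeff_mul_monic hw, leadingCoeff_C_mul_X_pow]

section

variable {D : Type*} [CommRing D] {n : ℕ} {A : Matrix (Fin n) (Fin n) D} {d e : D}
  {f g w : D[X]}

lemma memNullDvd_one (f : D[X]) : memNullDvd A 1 f :=
  ⟨aeval A f, (one_smul _ _).symm⟩

namespace memNullDvd

lemma add (hf : memNullDvd A d f) (hg : memNullDvd A d g) : memNullDvd A d (f + g) := by
  obtain ⟨B, hB⟩ := hf
  obtain ⟨B', hB'⟩ := hg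
  exact ⟨B + B', by rw [map_add, hB, hB', smul_add]⟩

lemma sub (hf : memNullDvd A d f) (hg : memNullDvd A d g) : memNullDvd A d (f - g) := by
  obtain ⟨B, hB⟩ := hf
  obtain ⟨B', hB'⟩ := hg
  exact ⟨B - B', by rw [map_sub, hB, hB', smul_sub]⟩

lemma mul_left (q : D[X]) (hf : memNullDvd A d f) : memNullDvd A d (q * f) := by
  obtain ⟨B, hB⟩ := hf
  exact ⟨aeval A q * B, by rw [map_mul, hB, mul_smul_comm]⟩

lemma mul_right (q : D[X]) (hf : memNullDvd A d f) : memNullDvd A d (f * q) :=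
  mul_comm q f ▸ hf.mul_left q

lemma C_mul (e : D) (hf : memNullDvd A d f) : memNullDvd A (e * d) (C e * f) := by
  obtain ⟨B, hB⟩ := hf
  refine ⟨B, ?_⟩
  rw [map_mul, aeval_C, hB, Algebra.algebraMap_eq_smul_one, smul_mul_assoc, one_mul, smul_smul]

lemma of_dvd (hde : d ∣ e) (hf : memNullDvd A e f) : memNullDvd A d f := by
  obtain ⟨B, hB⟩ := hf
  obtain ⟨k, rfl⟩ := hde
  exact ⟨k • B, by rw [hB, smul_smul]⟩

lemma of_C_mul [IsDomain D] (he : e ≠ 0) (hf : memNullDvd A (e * d) (C e * f)) :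
    memNullDvd A d f := by
  obtain ⟨B, hB⟩ := hf
  refine ⟨B, ?_⟩
  rw [map_mul, aeval_C, Algebra.algebraMap_eq_smul_one, smul_mul_assoc, one_mul,
    mul_smul] at hB
  exact smul_right_injective _ he hB

end memNullDvd

namespace IsMinPolyMod

lemma natDegree_eq_zero (hw : IsMinPolyMod A 1 w) : w.natDegree = 0 :=
  natDegree_eq_zero_iff_degree_le_zero.2 <|
    (hw.2.2 1 monic_one (memNullDvd_one 1)).trans degree_one_le

lemma degree_le_of_dvd {w' : D[X]} (hde : d ∣ e) (hw : IsMinPolyMod A d w)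
    (hw' : IsMinPolyMod A e w') : w.degree ≤ w'.degree :=
  hw.2.2 w' hw'.1 (hw'.2.1.of_dvd hde)

lemma degree_le_of_isCoprime_leadingCoeff (hw : IsMinPolyMod A d w) (hg : memNullDvd A d g)
    (hg0 : g ≠ 0) (hcop : IsCoprime d g.leadingCoeff) : w.degree ≤ g.degree := by
  obtain ⟨u, v, huv⟩ := hcop
  set m := g.natDegree
  set h : D[X] := C v * g + C u * (C d * X ^ m)
  have hcoeff : h.coeff m = 1 := by
    rw [coeff_add, coeff_C_mul, coeff_C_mul, coeff_C_mul, coeff_X_pow_self, coeff_natDegree]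
    linear_combination huv
  have hdeg : h.natDegree ≤ m := by
    refine natDegree_add_le_of_degree_le (natDegree_C_mul_le _ _) ?_
    exact (natDegree_C_mul_le _ _).trans ((natDegree_C_mul_le _ _).trans (natDegree_X_pow_le m))
  have hmonic : h.Monic := monic_of_natDegree_le_of_coeff_eq_one m hdeg hcoeff
  have hmem : memNullDvd A d h := by
    have hX : memNullDvd A d (C d * X ^ m) := by
      simpa only [mul_one] using memNullDvd.C_mul d (memNullDvd_one (A := A) (X ^ m))
    exact (hg.mul_left _).add (hX.mul_left _)
  calc w.degree ≤ h.degree := hw.2.2 h hmonic hmem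
    _ ≤ m := degree_le_of_natDegree_le hdeg
    _ = g.degree := (degree_eq_natDegree hg0).symm

end IsMinPolyMod

lemma le_of_mem_indexSet {ν : ℕ → D[X]} {ℓ i : ℕ} (hi : i ∈ indexSet ν ℓ) : i ≤ ℓ := by
  rcases Finset.mem_insert.1 hi with rfl | hi
  · rfl
  · exact (Finset.mem_range.1 (Finset.mem_filter.1 hi).1).le

end

section

variable {D : Type*} [CommRing D] {n : ℕ} {A : Matrix (Fin n) (Fin n) D} {p : D}
  {ν : ℕ → D[X]} {ℓ : ℕ} {f g : D[X]}

/-- `f ∈ Σ_{i ∈ I_A^ℓ[f]} p^{ℓ-i}·ν_i·D[X]`. -/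
def MemIndexSpan (p : D) (ν : ℕ → D[X]) (ℓ : ℕ) (f : D[X]) : Prop :=
  ∃ c : ℕ → D[X], f = ∑ i ∈ indexSet ν ℓ, C (p ^ (ℓ - i)) * ν i * c i ∧
    ∀ i ∈ indexSet ν ℓ, ¬ (ν i).degree ≤ f.degree → c i = 0

lemma memIndexSpan_zero : MemIndexSpan p ν ℓ 0 :=
  ⟨0, by simp, by simp⟩

lemma MemIndexSpan.add_C_pow_mul_mul {j : ℕ} (hg : MemIndexSpan p ν ℓ g) (q : D[X])
    (hj : j ∈ indexSet ν ℓ) (hjf : (ν j).degree ≤ f.degree) (hgf : g.degree ≤ f.degree)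
    (hfg : f = g + C (p ^ (ℓ - j)) * ν j * q) : MemIndexSpan p ν ℓ f := by
  obtain ⟨c, rfl, hc⟩ := hg
  refine ⟨fun i => c i + if i = j then q else 0, ?_, fun i hi hif => ?_⟩
  · simp only [mul_add, mul_ite, mul_zero, Finset.sum_add_distrib, Finset.sum_ite_eq',
      if_pos hj, hfg]
  · have hij : i ≠ j := by rintro rfl; exact hif hjf
    dsimp only
    rw [hc i hi (fun h => hif (h.trans hgf)), if_neg hij, add_zero]

lemma MemIndexSpan.C_pow_dvd {j : ℕ} (hf : MemIndexSpan p ν ℓ f)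
    (hj : ∀ i ∈ indexSet ν ℓ, (ν i).degree ≤ f.degree → i ≤ j) : C (p ^ (ℓ - j)) ∣ f := by
  obtain ⟨c, hfc, hc⟩ := hf
  rw [hfc]
  refine Finset.dvd_sum fun i hi => ?_
  by_cases hif : (ν i).degree ≤ f.degree
  · have hpow : p ^ (ℓ - j) ∣ p ^ (ℓ - i) := pow_dvd_pow p (by have := hj i hi hif; omega)
    exact ((map_dvd C hpow).mul_right _).mul_right _
  · rw [hc i hi hif, mul_zero]
    exact dvd_zero _

lemma memIndexSpan_of_dvd_leadingCoeff (hν : ∀ i, i ≤ ℓ → IsMinPolyMod A (p ^ i) (ν i))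
    (hlc : ∀ f, memNullDvd A (p ^ ℓ) f → ∀ j < ℓ, f.degree < (ν (j + 1)).degree →
      p ^ (ℓ - j) ∣ f.leadingCoeff)
    (hf : memNullDvd A (p ^ ℓ) f) : MemIndexSpan p ν ℓ f := by
  induction hd : f.natDegree using Nat.strong_induction_on generalizing f with
  | _ d ih =>
  by_cases hf0 : f = 0
  · exact hf0 ▸ memIndexSpan_zero
  set P : ℕ → Prop := fun i => (ν i).natDegree ≤ f.natDegree
  set j := Nat.findGreatest P ℓ
  have hjℓ : j ≤ ℓ := Nat.findGreatest_le ℓ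
  have hjf : (ν j).natDegree ≤ f.natDegree := by
    refine Nat.findGreatest_spec (P := P) (Nat.zero_le ℓ) ?_
    simp only [P, ((pow_zero p ▸ hν 0 (Nat.zero_le ℓ)) :).natDegree_eq_zero, zero_le]
  have hfj : j < ℓ → f.natDegree < (ν (j + 1)).natDegree := fun h =>
    not_le.1 (Nat.findGreatest_is_greatest (P := P) (Nat.lt_succ_self j) h)
  have hj : j ∈ indexSet ν ℓ := by
    rcases hjℓ.lt_or_eq with h | h
    · exact Finset.mem_insert_of_mem
        (Finset.mem_filter.2 ⟨Finset.mem_range.2 h, hjf.trans_lt (hfj h)⟩)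
    · exact h ▸ Finset.mem_insert_self _ _
  have hdvd : p ^ (ℓ - j) ∣ f.leadingCoeff := by
    rcases hjℓ.lt_or_eq with h | h
    · exact hlc f hf j h (degree_lt_degree (hfj h))
    · simp [h]
  have hνj := hν j hjℓ
  obtain ⟨q, hq⟩ := exists_degree_sub_C_mul_mul_lt hνj.1 hjf hf0 hdvd
  have hsub : memNullDvd A (p ^ ℓ) (C (p ^ (ℓ - j)) * ν j * q) :=
    ((hνj.2.1.C_mul _).mul_right q).of_dvd (by rw [← pow_add, Nat.sub_add_cancel hjℓ])
  have hrest : MemIndexSpan p ν ℓ (f - C (p ^ (ℓ - j)) * ν j * q) := by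
    by_cases h0 : f - C (p ^ (ℓ - j)) * ν j * q = 0
    · exact h0 ▸ memIndexSpan_zero
    · exact ih _ (hd ▸ natDegree_lt_natDegree h0 hq) (hf.sub hsub) rfl
  have hjf' : (ν j).degree ≤ f.degree := degree_eq_natDegree hf0 ▸ degree_le_of_natDegree_le hjf
  exact hrest.add_C_pow_mul_mul q hj hjf' hq.le (sub_add_cancel _ _).symm

end

section

variable {D : Type*} [CommRing D] [IsDomain D] [IsPrincipalIdealRing D] {n : ℕ}
  {A : Matrix (Fin n) (Fin n) D} {p : D} {ν : ℕ → D[X]} {ℓ : ℕ} {f : D[X]}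

lemma MemIndexSpan.pow_dvd_leadingCoeff (hp : Prime p)
    (hν : ∀ i, i ≤ ℓ + 1 → IsMinPolyMod A (p ^ i) (ν i)) (hspan : MemIndexSpan p ν ℓ f)
    (hf : memNullDvd A (p ^ (ℓ + 1)) f) {j : ℕ} (hjℓ : j ≤ ℓ)
    (hfj : f.degree < (ν (j + 1)).degree) : p ^ (ℓ + 1 - j) ∣ f.leadingCoeff := by
  obtain ⟨g, rfl⟩ : C (p ^ (ℓ - j)) ∣ f := by
    refine hspan.C_pow_dvd fun i hi hif => ?_
    by_contra! hji
    have hνi := hν i ((le_of_mem_indexSet hi).trans ℓ.le_succ)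
    have hle := (hν (j + 1) (by omega)).degree_le_of_dvd (pow_dvd_pow p hji) hνi
    exact lt_irrefl _ (hfj.trans_le (hle.trans hif))
  have hpj : p ^ (ℓ - j) ≠ 0 := pow_ne_zero _ hp.ne_zero
  have hg : memNullDvd A (p ^ (j + 1)) g :=
    memNullDvd.of_C_mul hpj (by rwa [← pow_add, show ℓ - j + (j + 1) = ℓ + 1 by omega])
  have hpg : p ∣ g.leadingCoeff := by
    by_cases hg0 : g = 0
    · simp [hg0]
    by_contra hndvd
    have hle := (hν (j + 1) (by omega)).degree_le_of_isCoprime_leadingCoeff hg hg0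
      (hp.coprime_iff_not_dvd.2 hndvd).pow_left
    rw [degree_C_mul hpj] at hfj
    exact hle.not_gt hfj
  rw [leadingCoeff_mul, leadingCoeff_C, show ℓ + 1 - j = ℓ - j + 1 by omega, pow_succ]
  exact mul_dvd_mul_left _ hpg

lemma memIndexSpan_of_memNullDvd (hp : Prime p)
    (hν : ∀ i, i ≤ ℓ → IsMinPolyMod A (p ^ i) (ν i)) (hf : memNullDvd A (p ^ ℓ) f) :
    MemIndexSpan p ν ℓ f := by
  induction ℓ generalizing f with
  | zero =>
    exact memIndexSpan_of_dvd_leadingCoeff hν (fun _ _ j hj => absurd hj j.not_lt_zero) hf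
  | succ ℓ ih =>
    refine memIndexSpan_of_dvd_leadingCoeff hν (fun g hg j hj hgj => ?_) hf
    have hspan : MemIndexSpan p ν ℓ g :=
      ih (fun i hi => hν i (hi.trans ℓ.le_succ)) (hg.of_dvd (pow_dvd_pow p ℓ.le_succ))
    exact hspan.pow_dvd_leadingCoeff hp hν hg (by omega) hgj

end

theorem stmt7_general {D : Type*} [CommRing D] [IsDomain D] [IsPrincipalIdealRing D]
    (p : D) (hp : Prime p) (ℓ : ℕ)
    {n : ℕ} (A : Matrix (Fin n) (Fin n) D)
    (ν : ℕ → Polynomial D)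
    (hν : ∀ i, i ≤ ℓ → IsMinPolyMod A (p ^ i) (ν i))
    (f : Polynomial D) (hf : memNullDvd A (p ^ ℓ) f) :
    ∃ c : ℕ → Polynomial D,
      f = ∑ i ∈ indexSet ν ℓ, Polynomial.C (p ^ (ℓ - i)) * ν i * c i ∧
      ∀ i ∈ indexSet ν ℓ, ¬ (ν i).degree ≤ f.degree → c i = 0 :=
  memIndexSpan_of_memNullDvd hp hν hf

/-- Let `p` be prime and `ν_i` `(p^i)`-minimal polynomials of `A` (with
`ν_0 = 1`). If `f ∈ N_{(p^ℓ)}(A)`, then `f ∈ Σ_{i ∈ I_A^ℓ[f]} p^{ℓ-i}·ν_i·D[X]`, where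
`I_A^ℓ[f] = {i ∈ I_A^ℓ : deg ν_i ≤ deg f}`: i.e. `f` is a combination of the generators
`p^{ℓ-i}·ν_i` whose coefficients vanish at every index `i` with `deg ν_i > deg f`. -/
theorem stmt7 {D : Type*} [CommRing D] [IsDomain D] [IsPrincipalIdealRing D]
    (p : D) (hp : Prime p) (ℓ : ℕ)
    {n : ℕ} (A : Matrix (Fin n) (Fin n) D)
    (ν : ℕ → Polynomial D) (hν0 : ν 0 = 1)
    (hν : ∀ i, i ≤ ℓ → IsMinPolyMod A (p ^ i) (ν i))
    (f : Polynomial D) (hf : memNullDvd A (p ^ ℓ) f) :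
    ∃ c : ℕ → Polynomial D,
      f = ∑ i ∈ indexSet ν ℓ, Polynomial.C (p ^ (ℓ - i)) * ν i * c i ∧
      ∀ i ∈ indexSet ν ℓ, ¬ (ν i).degree ≤ f.degree → c i = 0 :=
  stmt7_general p hp ℓ A ν hν f hf
end

section
/- Let D be a principal ideal domain with quotient field K, p ∈ D a prime element, and A an n×n matrix over D with minimal polynomial μ_A over K; then μ_A has coefficients in D, and if ν_i are (p^i)-minimal polynomials of A for i ≥ 0, there exists m ∈ ℕ such that deg(ν_ℓ) = deg(μ_A) for all ℓ ≥ m. -/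
/-! Over `K` the powers `1, A, …, A^(N-1)`, `N = deg μ_A`, are linearly independent, so some
`K`-linear map `Φ` recovers every polynomial `f` of degree `< N` from `f(A)`. Since `M_n(D)` is a
finitely generated `D`-module, the coefficients of `Φ` on integral matrices have a common
denominator `s ≠ 0`. If a monic `f` of degree `< N` satisfies `f(A) = d • B` with `B` integral,
then its leading coefficient `1` is `d` times such a coefficient, so `d ∣ s`. As `p ^ ℓ ∤ s` for
large `ℓ`, every monic polynomial in `N_{(p^ℓ)}(A)` then has degree `≥ N`, and `μ_A` itself lies
in all these ideals. -/

open Polynomial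

theorem exists_leftInverse_aeval_of_natDegree_lt {K S : Type*} [Field K] [Ring S] [Algebra K S]
    (x : S) : ∃ Φ : S →ₗ[K] K[X],
      ∀ f : K[X], f.natDegree < (minpoly K x).natDegree → Φ (aeval x f) = f := by
  set N := (minpoly K x).natDegree
  let ev : degreeLT K N →ₗ[K] S := (aeval x).toLinearMap ∘ₗ (degreeLT K N).subtype
  have hev : LinearMap.ker ev = ⊥ := by
    refine LinearMap.ker_eq_bot'.2 fun g (hg : aeval x (g : K[X]) = 0) =>
      Subtype.ext <| by_contra fun hg0 => ?_
    have hgN : (g : K[X]).natDegree < N :=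
      (natDegree_lt_iff_degree_lt hg0).2 (mem_degreeLT.1 g.2)
    exact hgN.not_ge (natDegree_le_natDegree (minpoly.degree_le_of_ne_zero K x hg0 hg))
  obtain ⟨g, hg⟩ := ev.exists_leftInverse_of_injective hev
  refine ⟨(degreeLT K N).subtype ∘ₗ g, fun f hf => ?_⟩
  have hfN : f ∈ degreeLT K N :=
    mem_degreeLT.2 (degree_le_natDegree.trans_lt (by exact_mod_cast hf))
  exact congrArg Subtype.val (LinearMap.congr_fun hg ⟨f, hfN⟩)

section Lattice

variable {D K : Type*} [CommRing D] [CommRing K] [Algebra D K] {m : Type*} [Fintype m]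

theorem Matrix.aeval_map_algebraMap [DecidableEq m] (A : Matrix m m D) (f : D[X]) :
    aeval (A.map (algebraMap D K)) (f.map (algebraMap D K)) =
      (aeval A f).map (algebraMap D K) := by
  rw [Polynomial.aeval_map_algebraMap]
  exact aeval_algHom_apply (Algebra.ofId D K).mapMatrix A f

variable [IsFractionRing D K]

theorem exists_smul_isInteger_map_algebraMap {ι : Type*} [Finite ι]
    (Λ : ι → Matrix m m K →ₗ[K] K) :
    ∃ s ∈ nonZeroDivisors D, ∀ i (B : Matrix m m D),
      IsLocalization.IsInteger D (s • Λ i (B.map (algebraMap D K))) := by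
  let ψ i : Matrix m m D →ₗ[D] K :=
    (Λ i).restrictScalars D ∘ₗ (Algebra.linearMap D K).mapMatrix
  have hfg : (⨆ i, LinearMap.range (ψ i)).FG :=
    Submodule.fg_iSup _ fun i => (LinearMap.range_eq_map (ψ i)) ▸ (Module.Finite.fg_top).map _
  obtain ⟨s, hs, hint⟩ := FractionalIdeal.isFractional_of_fg (S := nonZeroDivisors D) hfg
  exact ⟨s, hs, fun i B =>
    hint _ (Submodule.mem_iSup_of_mem i (LinearMap.mem_range_self (ψ i) B))⟩

end Lattice

section NullIdeal

variable {D : Type*} [CommRing D] {n : ℕ} {A : Matrix (Fin n) (Fin n) D} {d : D} {f : D[X]}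

theorem memNullDvd_of_aeval_eq_zero (h : aeval A f = 0) : memNullDvd A d f :=
  ⟨0, by rw [h, smul_zero]⟩

theorem memNullDvd.of_dvd_s8 {e : D} (h : memNullDvd A d f) (hed : e ∣ d) : memNullDvd A e f := by
  obtain ⟨B, hB⟩ := h
  obtain ⟨c, rfl⟩ := hed
  exact ⟨c • B, by rw [hB, smul_smul]⟩

theorem IsMinPolyMod.natDegree_le (h : IsMinPolyMod A d f) {g : D[X]} (hg : g.Monic)
    (hgA : memNullDvd A d g) : f.natDegree ≤ g.natDegree :=
  natDegree_le_natDegree (h.2.2 g hg hgA)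

end NullIdeal

section FractionField

variable {D : Type*} [CommRing D] (K : Type*) [Field K] [Algebra D K]
  [IsFractionRing D K] {n : ℕ} (A : Matrix (Fin n) (Fin n) D)

theorem Matrix.exists_monic_map_eq_minpoly [IsIntegrallyClosed D] :
    ∃ μ : D[X], μ.Monic ∧ μ.map (algebraMap D K) = minpoly K (A.map (algebraMap D K)) ∧
      aeval A μ = 0 := by
  set A' := A.map (algebraMap D K)
  have hA' : IsIntegral K A' := ⟨A'.charpoly, A'.charpoly_monic, A'.aeval_self_charpoly⟩
  have hdvd : minpoly K A' ∣ A.charpoly.map (algebraMap D K) :=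
    minpoly.dvd _ _ (by rw [← Matrix.charpoly_map]; exact A'.aeval_self_charpoly)
  obtain ⟨μ, hμ⟩ := IsIntegrallyClosed.eq_map_mul_C_of_dvd (K := K) A.charpoly_monic hdvd
  rw [(minpoly.monic hA').leadingCoeff, C_1, mul_one] at hμ
  have hinj := IsFractionRing.injective D K
  refine ⟨μ, monic_of_injective hinj (hμ ▸ minpoly.monic hA'), hμ, ?_⟩
  refine Matrix.map_injective hinj ?_
  dsimp only
  rw [← Matrix.aeval_map_algebraMap, hμ, minpoly.aeval, Matrix.map_zero _ (map_zero _)]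

variable {K A}

theorem dvd_of_memNullDvd_of_natDegree_lt {N : ℕ} {Φ : Matrix (Fin n) (Fin n) K →ₗ[K] K[X]}
    (hΦ : ∀ f : K[X], f.natDegree < N → Φ (aeval (A.map (algebraMap D K)) f) = f)
    {s : D} (hs : ∀ j < N, ∀ B : Matrix (Fin n) (Fin n) D,
      IsLocalization.IsInteger D (s • (Φ (B.map (algebraMap D K))).coeff j))
    {d : D} {f : D[X]} (hf : f.Monic) (hfN : f.natDegree < N) (hfA : memNullDvd A d f) : d ∣ s := by
  obtain ⟨B, hB⟩ := hfA
  obtain ⟨t, ht⟩ := hs _ hfN B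
  have hΦf := hΦ (f.map (algebraMap D K)) (by rwa [hf.natDegree_map])
  rw [Matrix.aeval_map_algebraMap, hB,
    Matrix.map_smul _ _ fun a => by rw [smul_eq_mul, map_mul, Algebra.smul_def],
    LinearMap.map_smul_of_tower] at hΦf
  have hcoeff : d • (Φ (B.map (algebraMap D K))).coeff f.natDegree = 1 := by
    rw [← coeff_smul, hΦf, coeff_map, hf.coeff_natDegree, map_one]
  refine ⟨t, IsFractionRing.injective D K ?_⟩
  rw [map_mul, ht, ← Algebra.smul_def, smul_comm, hcoeff, Algebra.smul_def, mul_one]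

variable (K A)

theorem exists_le_natDegree_of_memNullDvd_pow [IsDomain D] [WfDvdMonoid D] {p : D}
    (hp : ¬IsUnit p) : ∃ ℓ, ∀ f : D[X], f.Monic → memNullDvd A (p ^ ℓ) f →
      (minpoly K (A.map (algebraMap D K))).natDegree ≤ f.natDegree := by
  obtain ⟨Φ, hΦ⟩ := exists_leftInverse_aeval_of_natDegree_lt (K := K) (A.map (algebraMap D K))
  obtain ⟨s, hs0, hs⟩ := exists_smul_isInteger_map_algebraMap (D := D)
    fun j : Fin (minpoly K (A.map (algebraMap D K))).natDegree => lcoeff K j ∘ₗ Φ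
  obtain ⟨k, hk⟩ := FiniteMultiplicity.of_not_isUnit hp (nonZeroDivisors.ne_zero hs0)
  refine ⟨k + 1, fun f hf hfA => not_lt.1 fun hfN => hk ?_⟩
  exact dvd_of_memNullDvd_of_natDegree_lt hΦ (fun j hj => hs ⟨j, hj⟩) hf hfN hfA

end FractionField

/-- Let `D` be a PID with quotient field `K`, `p ∈ D` prime, and `A` a square
matrix over `D` with minimal polynomial `μ_A` over `K`. Then `μ_A` has coefficients in `D`
(i.e. is the image of some `μ ∈ D[X]`), and if `ν_i` are `(p^i)`-minimal polynomials of `A`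
for `i ≥ 0`, there is `m ∈ ℕ` with `deg ν_ℓ = deg μ_A` for all `ℓ ≥ m`. -/
theorem stmt8 {D : Type*} [CommRing D] [IsDomain D] [IsPrincipalIdealRing D]
    (K : Type*) [Field K] [Algebra D K] [IsFractionRing D K]
    (p : D) (hp : Prime p)
    {n : ℕ} (A : Matrix (Fin n) (Fin n) D)
    (ν : ℕ → Polynomial D) (hν : ∀ i, IsMinPolyMod A (p ^ i) (ν i)) :
    ∃ μ : Polynomial D,
      μ.map (algebraMap D K) = minpoly K (A.map (algebraMap D K)) ∧
      ∃ m : ℕ, ∀ ℓ, m ≤ ℓ → (ν ℓ).natDegree = μ.natDegree := by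
  obtain ⟨μ, hμ, hμK, hμA⟩ := A.exists_monic_map_eq_minpoly K
  obtain ⟨m, hm⟩ := exists_le_natDegree_of_memNullDvd_pow K A hp.not_isUnit
  refine ⟨μ, hμK, m, fun ℓ hℓ => le_antisymm ?_ ?_⟩
  · exact (hν ℓ).natDegree_le hμ (memNullDvd_of_aeval_eq_zero hμA)
  · rw [← hμ.natDegree_map (algebraMap D K), hμK]
    exact hm _ (hν ℓ).1 ((hν ℓ).2.1.of_dvd_s8 (pow_dvd_pow p hℓ))
end

section
/- Let D be a principal ideal domain with quotient field K and A an n×n matrix over D with minimal polynomial μ_A ∈ D[X]. Then there exist a finite set P_A of prime elements of D and natural numbers m_p ∈ ℕ for p ∈ P_A such that the ring of images {f(A) : f ∈ Int(A, M_n(D))} equals D[A] + Σ_{p ∈ P_A} Σ_{j ∈ I_A^{(p, m_p)}} (ν_{(p,j)}(A)/p^j)·D[A], where ν_{(p,j)} ∈ D[X] are (p^j)-minimal polynomials of A and I_A^{(p, m_p)} is the m_p-th index set of A with respect to p. -/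
/-- `f ∈ Int(A, M_n(D))`: the polynomial `f ∈ K[X]` is integer-valued on `A`. -/
def IsIntValuedOn {D K : Type*} [CommRing D] [CommRing K] [Algebra D K] {n : ℕ}
    (A : Matrix (Fin n) (Fin n) D) (f : Polynomial K) : Prop :=
  ∃ B : Matrix (Fin n) (Fin n) D,
    Polynomial.aeval (A.map (algebraMap D K)) f = B.map (algebraMap D K)

/-!
For a prime `p`, the null ideal `N_{(p^ℓ)}(A)` is spanned by the `p^{ℓ-k} ν_k`, `k ≤ ℓ`. The key
point is that an element of `N_{(p^{ℓ+1})}(A)` of degree below `deg ν_{ℓ+1}` is divisible by `p`: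
otherwise a Bezout combination of it with `p X^k ν_ℓ` would be a monic element of
`N_{(p^{ℓ+1})}(A)` of smaller degree than `ν_{ℓ+1}`. Hence `p^m x = g(A)` makes `x` a
`D[A]`-combination of the `W_k = ν_k(A)/p^k`, `k ≤ m`, and each such `W_k` lies in
`D[A] + Σ_{j ∈ I^{(m)}} W_j D[A]`: for the last `j ≥ k` with `deg ν_j = deg ν_k` we have
`j ∈ I^{(m)}`, and `ν_j - ν_k` has low degree, which expresses `W_k` through `W_j` and the `W_i`
with `i < k`.

The images of `Int(A, M_n(D))` form a finitely generated `D`-module each of whose elements has a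
nonzero multiple in `D[A]`, so a single `d ≠ 0` clears all denominators; splitting `d` into
coprime prime powers reduces the theorem to the local statement above.
-/

open Polynomial Finset UniqueFactorizationMonoid

section NullIdeal

variable {D : Type*} [CommRing D] {n : ℕ}

def Matrix.nullIdeal (A : Matrix (Fin n) (Fin n) D) (d : D) : Ideal D[X] where
  carrier := {f | memNullDvd A d f}
  add_mem' := by
    rintro f g ⟨B, hB⟩ ⟨C, hC⟩
    exact ⟨B + C, by simp [hB, hC]⟩
  zero_mem' := ⟨0, by simp⟩
  smul_mem' := by
    rintro g f ⟨B, hB⟩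
    exact ⟨aeval A g * B, by simp [hB]⟩

variable {A : Matrix (Fin n) (Fin n) D}

theorem Matrix.nullIdeal_le_of_dvd {a b : D} (h : a ∣ b) : A.nullIdeal b ≤ A.nullIdeal a := by
  obtain ⟨c, rfl⟩ := h
  rintro f ⟨B, hB⟩
  exact ⟨c • B, by rw [hB, smul_smul]⟩

theorem Matrix.C_mul_mem_nullIdeal {d : D} {f : D[X]} (hf : f ∈ A.nullIdeal d) (a : D) :
    C a * f ∈ A.nullIdeal (a * d) := by
  obtain ⟨B, hB⟩ := hf
  exact ⟨B, by rw [map_mul, hB, aeval_C, Algebra.algebraMap_eq_smul_one, smul_mul_assoc,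
    one_mul, smul_smul]⟩

theorem Matrix.mem_nullIdeal_of_C_mul_mem [IsDomain D] {a d : D} (ha : a ≠ 0) {f : D[X]}
    (hf : C a * f ∈ A.nullIdeal (a * d)) : f ∈ A.nullIdeal d := by
  obtain ⟨B, hB⟩ := hf
  refine ⟨B, smul_right_injective _ ha ?_⟩
  simpa only [map_mul, aeval_C, Algebra.algebraMap_eq_smul_one, smul_mul_assoc, one_mul,
    smul_smul] using hB

theorem exists_isMinPolyMod (A : Matrix (Fin n) (Fin n) D) (d : D) :
    ∃ f, IsMinPolyMod A d f := by
  classical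
  have hex : ∃ k, ∃ f : D[X], f.Monic ∧ f ∈ A.nullIdeal d ∧ f.natDegree = k :=
    ⟨_, A.charpoly, A.charpoly_monic, ⟨0, by simp [Matrix.aeval_self_charpoly]⟩, rfl⟩
  obtain ⟨f, hfm, hfd, hfk⟩ := Nat.find_spec hex
  refine ⟨f, hfm, hfd, fun g hgm hgd => ?_⟩
  nontriviality D
  rw [degree_eq_natDegree hfm.ne_zero, degree_eq_natDegree hgm.ne_zero, hfk]
  exact_mod_cast Nat.find_min' hex ⟨g, hgm, hgd, rfl⟩

theorem IsMinPolyMod.degree_le_of_dvd_s18 {a b : D} {f g : D[X]} (hf : IsMinPolyMod A a f)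
    (hg : IsMinPolyMod A b g) (h : a ∣ b) : f.degree ≤ g.degree :=
  hf.2.2 g hg.1 (Matrix.nullIdeal_le_of_dvd h hg.2.1)

theorem IsMinPolyMod.eq_one {f : D[X]} (hf : IsMinPolyMod A 1 f) : f = 1 := by
  nontriviality D
  refine eq_one_of_monic_natDegree_zero hf.1 (natDegree_eq_zero_iff_degree_le_zero.2 ?_)
  simpa using hf.2.2 1 monic_one ⟨aeval A 1, (one_smul D _).symm⟩

theorem IsMinPolyMod.exists_monic_mem_nullIdeal [Nontrivial D] {d : D} {f : D[X]}
    (hf : IsMinPolyMod A d f) {N : ℕ} (hN : f.natDegree ≤ N) :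
    ∃ h : D[X], h.Monic ∧ h.natDegree = N ∧ h ∈ A.nullIdeal d := by
  refine ⟨X ^ (N - f.natDegree) * f, (monic_X_pow _).mul hf.1, ?_, Ideal.mul_mem_left _ _ hf.2.1⟩
  rw [(monic_X_pow _).natDegree_mul hf.1, natDegree_X_pow]
  omega

end NullIdeal

section Decomposition

variable {D : Type*} [CommRing D] {n : ℕ} {A : Matrix (Fin n) (Fin n) D} {p : D} {ν : ℕ → D[X]}

theorem exists_eq_sum_of_mem_nullIdeal_of_forall_degree_lt [Nontrivial D] {ℓ : ℕ}
    (hν : IsMinPolyMod A (p ^ ℓ) (ν ℓ)) (hlow : ∀ g ∈ A.nullIdeal (p ^ ℓ), g.degree < (ν ℓ).degree →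
      ∃ q : ℕ → D[X], g = ∑ k ∈ range ℓ, C (p ^ (ℓ - k)) * ν k * q k)
    {g : D[X]} (hg : g ∈ A.nullIdeal (p ^ ℓ)) :
    ∃ q : ℕ → D[X], g = ∑ k ∈ range (ℓ + 1), C (p ^ (ℓ - k)) * ν k * q k := by
  obtain ⟨q, hq⟩ := hlow (g %ₘ ν ℓ)
    (by
      rw [eq_sub_of_add_eq (modByMonic_add_div g (ν ℓ))]
      exact sub_mem hg (Ideal.mul_mem_right _ _ hν.2.1))
    (degree_modByMonic_lt g hν.1)
  refine ⟨Function.update q ℓ (g /ₘ ν ℓ), ?_⟩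
  rw [sum_range_succ, Function.update_self, Nat.sub_self, pow_zero, C_1, one_mul,
    sum_congr rfl fun k hk => by rw [Function.update_of_ne (by rw [mem_range] at hk; omega)],
    ← hq, modByMonic_add_div]

variable [IsDomain D] [IsPrincipalIdealRing D]

/-- A Bezout combination of `g` and `p h` is a monic element of `N_{(d)}` of degree `deg g`. -/
theorem IsMinPolyMod.degree_le_of_not_dvd_leadingCoeff {d p : D} (hp : Prime p) {f g h : D[X]}
    (hf : IsMinPolyMod A d f) (hg : g ∈ A.nullIdeal d) (hlc : ¬p ∣ g.leadingCoeff)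
    (hh : h.Monic) (hhg : h.natDegree = g.natDegree) (hph : C p * h ∈ A.nullIdeal d) :
    f.degree ≤ g.degree := by
  obtain ⟨u, v, huv⟩ := (hp.irreducible.coprime_iff_not_dvd).2 hlc
  have hGg : (C v * g + C u * (C p * h)).natDegree ≤ g.natDegree :=
    (natDegree_add_le _ _).trans (max_le (natDegree_C_mul_le _ _)
      ((natDegree_C_mul_le _ _).trans ((natDegree_C_mul_le _ _).trans hhg.le)))
  have hGm : (C v * g + C u * (C p * h)).Monic := by
    refine monic_of_natDegree_le_of_coeff_eq_one _ hGg ?_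
    rw [coeff_add, coeff_C_mul, coeff_C_mul, coeff_C_mul, coeff_natDegree, ← hhg,
      hh.coeff_natDegree]
    linear_combination huv
  have hG : C v * g + C u * (C p * h) ∈ A.nullIdeal d :=
    add_mem (Ideal.mul_mem_left _ _ hg) (Ideal.mul_mem_left _ _ hph)
  have hg0 : g ≠ 0 := by
    rintro rfl
    simp at hlc
  exact (hf.2.2 _ hGm hG).trans
    ((degree_le_of_natDegree_le hGg).trans (degree_eq_natDegree hg0).ge)

/-- Strong induction on `deg g`: when `p` divides the leading coefficient of `g`, cancel it
against a multiple of `p X^k ν_ℓ`. -/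
theorem C_dvd_of_mem_nullIdeal_of_degree_lt (hp : Prime p)
    (hν : ∀ j, IsMinPolyMod A (p ^ j) (ν j)) {ℓ : ℕ}
    (hlow : ∀ g ∈ A.nullIdeal (p ^ ℓ), g.degree < (ν ℓ).degree →
      ∃ q : ℕ → D[X], g = ∑ k ∈ range ℓ, C (p ^ (ℓ - k)) * ν k * q k)
    {g : D[X]} (hg : g ∈ A.nullIdeal (p ^ (ℓ + 1))) (hdeg : g.degree < (ν (ℓ + 1)).degree) :
    C p ∣ g := by
  induction hN : g.natDegree using Nat.strong_induction_on generalizing g with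
  | _ N ih =>
  by_cases hsmall : g.degree < (ν ℓ).degree
  · obtain ⟨q, rfl⟩ := hlow g (Matrix.nullIdeal_le_of_dvd (pow_dvd_pow p ℓ.le_succ) hg) hsmall
    refine Finset.dvd_sum fun k hk => ?_
    have hpk : p ∣ p ^ (ℓ - k) := dvd_pow_self p (by rw [Finset.mem_range] at hk; omega)
    exact ((map_dvd C hpk).mul_right _).mul_right _
  rw [not_lt] at hsmall
  have hg0 : g ≠ 0 := by
    rintro rfl
    simp [degree_eq_bot.not.2 (hν ℓ).1.ne_zero] at hsmall
  obtain ⟨h, hhm, hhN, hhmem⟩ := (hν ℓ).exists_monic_mem_nullIdeal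
    (hN ▸ natDegree_le_natDegree hsmall)
  have hph : C p * h ∈ A.nullIdeal (p ^ (ℓ + 1)) := by
    rw [pow_succ']
    exact Matrix.C_mul_mem_nullIdeal hhmem p
  by_cases hlc : p ∣ g.leadingCoeff
  · obtain ⟨b, hb⟩ := hlc
    have hbh : C g.leadingCoeff * h = C b * (C p * h) := by rw [hb, C_mul]; ring
    have hg' : g - C g.leadingCoeff * h ∈ A.nullIdeal (p ^ (ℓ + 1)) :=
      sub_mem hg (hbh ▸ Ideal.mul_mem_left _ _ hph)
    suffices hdvd : C p ∣ g - C g.leadingCoeff * h by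
      have := hdvd.add (dvd_mul_of_dvd_right (dvd_mul_right (C p) h) (C b))
      rwa [← hbh, sub_add_cancel] at this
    by_cases hg'0 : g - C g.leadingCoeff * h = 0
    · rw [hg'0]; exact dvd_zero _
    have hlt : (g - C g.leadingCoeff * h).degree < g.degree := by
      refine degree_sub_lt_left ?_ hg0 ?_
      · rw [degree_C_mul (leadingCoeff_ne_zero.2 hg0), degree_eq_natDegree hhm.ne_zero,
          degree_eq_natDegree hg0, hhN, hN]
      · rw [leadingCoeff_mul, leadingCoeff_C, hhm.leadingCoeff, mul_one]
    exact ih _ (hN ▸ natDegree_lt_natDegree hg'0 hlt) hg' (hlt.trans hdeg) rfl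
  · exact absurd ((hν (ℓ + 1)).degree_le_of_not_dvd_leadingCoeff hp hg hlc hhm (hhN.trans hN.symm)
      hph) (not_le.2 hdeg)

theorem exists_eq_sum_of_mem_nullIdeal_of_degree_lt (hp : Prime p)
    (hν : ∀ j, IsMinPolyMod A (p ^ j) (ν j)) (ℓ : ℕ) :
    ∀ g ∈ A.nullIdeal (p ^ ℓ), g.degree < (ν ℓ).degree →
      ∃ q : ℕ → D[X], g = ∑ k ∈ range ℓ, C (p ^ (ℓ - k)) * ν k * q k := by
  induction ℓ with
  | zero =>
    intro g _ hg
    have hν0 : ν 0 = 1 := (pow_zero p ▸ hν 0).eq_one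
    exact ⟨0, by simpa [hν0] using hg⟩
  | succ ℓ ih =>
    intro g hg hdeg
    obtain ⟨h, rfl⟩ := C_dvd_of_mem_nullIdeal_of_degree_lt hp hν ih hg hdeg
    obtain ⟨q, rfl⟩ := exists_eq_sum_of_mem_nullIdeal_of_forall_degree_lt (hν ℓ) ih
      (Matrix.mem_nullIdeal_of_C_mul_mem hp.ne_zero (by rwa [← pow_succ']))
    refine ⟨q, ?_⟩
    rw [Finset.mul_sum]
    refine sum_congr rfl fun k hk => ?_
    rw [mem_range] at hk
    rw [show ℓ + 1 - k = ℓ - k + 1 by omega, pow_succ', C_mul]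
    ring

theorem exists_eq_sum_of_mem_nullIdeal (hp : Prime p) (hν : ∀ j, IsMinPolyMod A (p ^ j) (ν j))
    {ℓ : ℕ} {g : D[X]} (hg : g ∈ A.nullIdeal (p ^ ℓ)) :
    ∃ q : ℕ → D[X], g = ∑ k ∈ range (ℓ + 1), C (p ^ (ℓ - k)) * ν k * q k :=
  exists_eq_sum_of_mem_nullIdeal_of_forall_degree_lt (hν ℓ)
    (exists_eq_sum_of_mem_nullIdeal_of_degree_lt hp hν ℓ) hg

end Decomposition

section AevalSpan

variable {D : Type*} [CommRing D] {n : ℕ} {A : Matrix (Fin n) (Fin n) D}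

variable (A) in
def Matrix.aevalSpan {ι : Type*} (s : Finset ι) (W : ι → Matrix (Fin n) (Fin n) D) :
    Submodule D (Matrix (Fin n) (Fin n) D) where
  carrier := {x | ∃ (g : D[X]) (c : ι → D[X]), x = aeval A g + ∑ i ∈ s, W i * aeval A (c i)}
  add_mem' := by
    rintro _ _ ⟨g, c, rfl⟩ ⟨g', c', rfl⟩
    refine ⟨g + g', c + c', ?_⟩
    simp only [map_add, Pi.add_apply, mul_add, sum_add_distrib]
    abel
  zero_mem' := ⟨0, 0, by simp⟩
  smul_mem' := by
    rintro a _ ⟨g, c, rfl⟩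
    exact ⟨a • g, a • c, by simp [smul_add, smul_sum]⟩

variable {ι : Type*} {s : Finset ι} {W : ι → Matrix (Fin n) (Fin n) D}

theorem Matrix.aeval_mem_aevalSpan (g : D[X]) : aeval A g ∈ A.aevalSpan s W :=
  ⟨g, 0, by simp⟩

theorem Matrix.mem_aevalSpan_of_mem {i : ι} (hi : i ∈ s) : W i ∈ A.aevalSpan s W := by
  classical
  exact ⟨0, fun j => if j = i then 1 else 0, by simp [hi]⟩

theorem Matrix.mul_aeval_mem_aevalSpan {x : Matrix (Fin n) (Fin n) D} (hx : x ∈ A.aevalSpan s W)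
    (h : D[X]) : x * aeval A h ∈ A.aevalSpan s W := by
  obtain ⟨g, c, rfl⟩ := hx
  exact ⟨g * h, fun i => c i * h, by simp [add_mul, sum_mul, mul_assoc]⟩

variable (A) in
theorem Matrix.coe_aevalSpan_sigma {κ : Type*} (P : Finset ι) (I : ι → Finset κ)
    (W : ι → κ → Matrix (Fin n) (Fin n) D) :
    (A.aevalSpan (P.sigma I) (fun i => W i.1 i.2) : Set (Matrix (Fin n) (Fin n) D)) =
      {M | ∃ (g : D[X]) (c : ι → κ → D[X]),
        M = aeval A g + ∑ p ∈ P, ∑ j ∈ I p, W p j * aeval A (c p j)} := by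
  ext M
  constructor
  · rintro ⟨g, c, rfl⟩
    exact ⟨g, fun p j => c ⟨p, j⟩, by rw [sum_sigma]⟩
  · rintro ⟨g, c, rfl⟩
    exact ⟨g, fun i => c i.1 i.2, by rw [sum_sigma]⟩

theorem Matrix.aevalSpan_le_aevalSpan_sigma {κ : Type*} {P : Finset ι} {I : ι → Finset κ}
    {W : ι → κ → Matrix (Fin n) (Fin n) D} {p : ι} (hp : p ∈ P) :
    A.aevalSpan (I p) (W p) ≤ A.aevalSpan (P.sigma I) (fun i => W i.1 i.2) := by
  rintro _ ⟨g, c, rfl⟩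
  refine add_mem (A.aeval_mem_aevalSpan g) (sum_mem fun j hj => ?_)
  have hW : W p j ∈ A.aevalSpan (P.sigma I) (fun i => W i.1 i.2) :=
    Matrix.mem_aevalSpan_of_mem (i := (⟨p, j⟩ : (_ : ι) × κ)) (mem_sigma.2 ⟨hp, hj⟩)
  exact Matrix.mul_aeval_mem_aevalSpan hW _

end AevalSpan

section OnePrime

variable {D : Type*} [CommRing D] {n : ℕ} {A : Matrix (Fin n) (Fin n) D} {p : D}
  {ν : ℕ → D[X]} {W : ℕ → Matrix (Fin n) (Fin n) D}

theorem aeval_sum_C_pow_mul (hW : ∀ j, p ^ j • W j = aeval A (ν j)) {ℓ : ℕ} {s : Finset ℕ}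
    (hs : ∀ k ∈ s, k ≤ ℓ) (q : ℕ → D[X]) :
    aeval A (∑ k ∈ s, C (p ^ (ℓ - k)) * ν k * q k) = p ^ ℓ • ∑ k ∈ s, W k * aeval A (q k) := by
  rw [map_sum, smul_sum]
  refine sum_congr rfl fun k hk => ?_
  rw [map_mul, map_mul, aeval_C, Algebra.algebraMap_eq_smul_one, ← hW, smul_mul_assoc, one_mul,
    smul_mul_assoc, smul_mul_assoc, smul_smul, ← pow_add, Nat.sub_add_cancel (hs k hk)]

variable [IsDomain D] [IsPrincipalIdealRing D]

/-- If `j ≥ i` is the last index with `deg ν_j = deg ν_i`, then `ν_j - ν_i ∈ N_{(p^i)}` has degree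
below `deg ν_i`, which expresses `W_i` through `W_j` and the `W_k`, `k < i`. -/
theorem mem_aevalSpan_indexSet (hp : Prime p) (hν : ∀ j, IsMinPolyMod A (p ^ j) (ν j))
    (hW : ∀ j, p ^ j • W j = aeval A (ν j)) {m i : ℕ} (hi : i ≤ m) :
    W i ∈ A.aevalSpan (indexSet ν m) W := by
  classical
  induction i using Nat.strong_induction_on with
  | _ i ih =>
  let P k := (ν k).natDegree = (ν i).natDegree
  set j := Nat.findGreatest P m
  have hij : i ≤ j := Nat.le_findGreatest (P := P) hi rfl
  have hjm : j ≤ m := Nat.findGreatest_le m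
  have hdeg : (ν j).natDegree = (ν i).natDegree := Nat.findGreatest_spec (P := P) hi rfl
  have hjI : j ∈ indexSet ν m := by
    rcases hjm.lt_or_eq with hjm | hjm
    · refine mem_insert_of_mem (mem_filter.2 ⟨mem_range.2 hjm, ?_⟩)
      have hne := Nat.findGreatest_is_greatest (lt_add_one j) hjm
      have hmono := natDegree_le_natDegree
        ((hν j).degree_le_of_dvd_s18 (hν (j + 1)) (pow_dvd_pow p j.le_succ))
      omega
    · rw [hjm]
      exact mem_insert_self _ _
  have hδ : ν j - ν i ∈ A.nullIdeal (p ^ i) :=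
    sub_mem (Matrix.nullIdeal_le_of_dvd (pow_dvd_pow p hij) (hν j).2.1) (hν i).2.1
  have hδdeg : (ν j - ν i).degree < (ν i).degree := by
    have hji : (ν j).degree = (ν i).degree := by
      rw [degree_eq_natDegree (hν j).1.ne_zero, degree_eq_natDegree (hν i).1.ne_zero, hdeg]
    rw [← hji]
    exact degree_sub_lt_left hji (hν j).1.ne_zero
      (by rw [(hν j).1.leadingCoeff, (hν i).1.leadingCoeff])
  obtain ⟨q, hq⟩ := exists_eq_sum_of_mem_nullIdeal_of_degree_lt hp hν i _ hδ hδdeg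
  have hWi : W i = p ^ (j - i) • W j - ∑ k ∈ range i, W k * aeval A (q k) := by
    apply smul_right_injective _ (pow_ne_zero i hp.ne_zero)
    beta_reduce
    rw [smul_sub, smul_smul, ← pow_add, Nat.add_sub_cancel' hij, hW, hW,
      ← aeval_sum_C_pow_mul hW (fun k hk => (mem_range.1 hk).le), ← hq, map_sub, sub_sub_cancel]
  rw [hWi]
  refine sub_mem (Submodule.smul_mem _ _ (Matrix.mem_aevalSpan_of_mem hjI))
    (sum_mem fun k hk => Matrix.mul_aeval_mem_aevalSpan ?_ _)
  rw [mem_range] at hk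
  exact ih k hk (by omega)

theorem mem_aevalSpan_of_pow_smul_eq_aeval (hp : Prime p)
    (hν : ∀ j, IsMinPolyMod A (p ^ j) (ν j)) (hW : ∀ j, p ^ j • W j = aeval A (ν j)) {m : ℕ}
    {x : Matrix (Fin n) (Fin n) D} {g : D[X]}
    (hx : p ^ m • x = aeval A g) : x ∈ A.aevalSpan (indexSet ν m) W := by
  obtain ⟨q, rfl⟩ := exists_eq_sum_of_mem_nullIdeal hp hν (⟨x, hx.symm⟩ : g ∈ A.nullIdeal (p ^ m))
  rw [aeval_sum_C_pow_mul hW fun k hk => Nat.lt_succ_iff.1 (mem_range.1 hk)] at hx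
  rw [smul_right_injective _ (pow_ne_zero m hp.ne_zero) hx]
  exact sum_mem fun k hk => Matrix.mul_aeval_mem_aevalSpan
    (mem_aevalSpan_indexSet hp hν hW (Nat.lt_succ_iff.1 (mem_range.1 hk))) _

end OnePrime

namespace Submodule

variable {R M : Type*} [CommRing R] [AddCommGroup M] [Module R M] {T S : Submodule R M}

theorem mem_of_mul_smul_mem_of_isCoprime {a b : R} (hab : IsCoprime a b)
    (ha : ∀ y, a • y ∈ T → y ∈ S) (hb : ∀ y, b • y ∈ T → y ∈ S) {x : M}
    (hx : (a * b) • x ∈ T) : x ∈ S := by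
  obtain ⟨u, v, huv⟩ := hab
  have hax : a • x ∈ S := hb _ (by rwa [smul_smul, mul_comm])
  have hbx : b • x ∈ S := ha _ (by rwa [smul_smul])
  have hx' : x = u • a • x + v • b • x := by
    rw [smul_smul, smul_smul, ← add_smul, huv, one_smul]
  rw [hx']
  exact add_mem (S.smul_mem u hax) (S.smul_mem v hbx)

theorem mem_of_prod_smul_mem {ι : Type*} {s : Finset ι} {a : ι → R}
    (hcop : (s : Set ι).Pairwise fun i j => IsCoprime (a i) (a j)) (hTS : T ≤ S)
    (h : ∀ i ∈ s, ∀ y, a i • y ∈ T → y ∈ S) {x : M} (hx : (∏ i ∈ s, a i) • x ∈ T) : x ∈ S := by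
  classical
  induction s using Finset.induction_on generalizing x with
  | empty => exact hTS (by simpa using hx)
  | insert i s hi ih =>
    rw [prod_insert hi] at hx
    refine mem_of_mul_smul_mem_of_isCoprime
      (IsCoprime.prod_right fun j hj => hcop (by simp) (by simp [hj]) (by rintro rfl; exact hi hj))
      (h i (mem_insert_self i s)) (fun y hy => ih (hcop.mono (by simp))
        (fun j hj => h j (mem_insert_of_mem hj)) hy) hx

theorem exists_mem_nonZeroDivisors_forall_smul_mem {N : Submodule R M} [Module.Finite R N]
    (h : ∀ x ∈ N, ∃ r ∈ nonZeroDivisors R, r • x ∈ T) :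
    ∃ r ∈ nonZeroDivisors R, ∀ x ∈ N, r • x ∈ T := by
  have htors : Module.IsTorsion R (N ⧸ T.comap N.subtype) := by
    intro y
    induction y using Quotient.induction_on with | _ x =>
    obtain ⟨r, hr, hrx⟩ := h x x.2
    exact ⟨⟨r, hr⟩, (Quotient.mk_eq_zero _).2 hrx⟩
  obtain ⟨r, hann, hr⟩ := annihilator_top_inter_nonZeroDivisors htors
  refine ⟨r, hr, fun x hx => ?_⟩
  have := mem_annihilator.1 hann (Quotient.mk ⟨x, hx⟩) trivial
  rwa [← Quotient.mk_smul, Quotient.mk_eq_zero] at this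

end Submodule

section IntImage

variable {D : Type*} [CommRing D] (K : Type*) [Field K] [Algebra D K] {n : ℕ}
  (A : Matrix (Fin n) (Fin n) D)

/-- The image `{f(A) : f ∈ Int(A, M_n(D))}` as a `D`-submodule of `M_n(D)`. -/
noncomputable def Matrix.intImage : Submodule D (Matrix (Fin n) (Fin n) D) :=
  ((aeval (R := K) (A.map (algebraMap D K))).range.toSubmodule.restrictScalars D).comap
    (Algebra.linearMap D K).mapMatrix

variable {K A}

theorem Matrix.mem_intImage {x : Matrix (Fin n) (Fin n) D} :
    x ∈ A.intImage K ↔ ∃ f : K[X], aeval (A.map (algebraMap D K)) f = x.map (algebraMap D K) :=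
  Iff.rfl

theorem Matrix.aeval_map_eq_map_aeval (g : D[X]) :
    aeval (A.map (algebraMap D K)) (g.map (algebraMap D K)) = (aeval A g).map (algebraMap D K) := by
  rw [Polynomial.aeval_map_algebraMap]
  exact aeval_algHom_apply (Algebra.ofId D K).mapMatrix A g

theorem Matrix.aeval_mem_intImage (g : D[X]) : aeval A g ∈ A.intImage K :=
  Matrix.mem_intImage.2 ⟨_, A.aeval_map_eq_map_aeval g⟩

theorem Matrix.mem_intImage_of_smul_eq_aeval [IsDomain D] [IsFractionRing D K] {d : D}
    (hd : d ≠ 0) {W : Matrix (Fin n) (Fin n) D} {g : D[X]} (hW : d • W = aeval A g) :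
    W ∈ A.intImage K := by
  have hd' : algebraMap D K d ≠ 0 := (map_ne_zero_iff _ (IsFractionRing.injective D K)).2 hd
  refine Matrix.mem_intImage.2 ⟨C (algebraMap D K d)⁻¹ * g.map (algebraMap D K), ?_⟩
  rw [map_mul, aeval_C, A.aeval_map_eq_map_aeval, ← hW, ← Algebra.smul_def,
    Matrix.map_smul' _ _ _ (map_mul _), smul_smul, inv_mul_cancel₀ hd', one_smul]

theorem Matrix.exists_smul_mem_range_of_mem_intImage [IsFractionRing D K]
    {x : Matrix (Fin n) (Fin n) D} (hx : x ∈ A.intImage K) :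
    ∃ r ∈ nonZeroDivisors D, r • x ∈ (aeval (R := D) A).range.toSubmodule := by
  obtain ⟨f, hf⟩ := Matrix.mem_intImage.1 hx
  obtain ⟨b, hb, hbf⟩ := IsLocalization.integerNormalization_spec (nonZeroDivisors D) f
  refine ⟨b, hb, IsLocalization.integerNormalization (nonZeroDivisors D) f,
    Matrix.map_injective (IsFractionRing.injective D K) ?_⟩
  change (aeval A _).map (algebraMap D K) = (b • x).map (algebraMap D K)
  rw [← A.aeval_map_eq_map_aeval, hbf, ← algebraMap_smul K b f, map_smul, hf,
    Matrix.map_smul' _ _ _ (map_mul _)]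

theorem Matrix.exists_ne_zero_forall_smul_mem_range [IsDomain D] [IsPrincipalIdealRing D]
    [IsFractionRing D K] :
    ∃ d ≠ (0 : D), ∀ x ∈ A.intImage K, d • x ∈ (aeval (R := D) A).range.toSubmodule := by
  obtain ⟨d, hd, h⟩ := Submodule.exists_mem_nonZeroDivisors_forall_smul_mem
    fun x hx => Matrix.exists_smul_mem_range_of_mem_intImage (A := A) (K := K) hx
  exact ⟨d, nonZeroDivisors.ne_zero hd, h⟩

theorem Matrix.coe_intImage : (A.intImage K : Set (Matrix (Fin n) (Fin n) D)) =
    {M | ∃ f : K[X], IsIntValuedOn A f ∧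
      M.map (algebraMap D K) = aeval (A.map (algebraMap D K)) f} := by
  ext M
  exact ⟨fun ⟨f, hf⟩ => ⟨f, ⟨M, hf⟩, hf.symm⟩, fun ⟨f, _, hf⟩ => ⟨f, hf.symm⟩⟩

variable (K) in
theorem Matrix.aevalSpan_le_intImage [IsDomain D] [IsFractionRing D K] {ι : Type*}
    {s : Finset ι} {W : ι → Matrix (Fin n) (Fin n) D} {d : ι → D} (hd : ∀ i ∈ s, d i ≠ 0)
    (hW : ∀ i ∈ s, ∃ g : D[X], d i • W i = aeval A g) : A.aevalSpan s W ≤ A.intImage K := by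
  rintro _ ⟨g, c, rfl⟩
  refine add_mem (A.aeval_mem_intImage g) (sum_mem fun i hi => ?_)
  obtain ⟨f, hf⟩ := hW i hi
  exact Matrix.mem_intImage_of_smul_eq_aeval (hd i hi) (by rw [← smul_mul_assoc, hf, ← map_mul])

end IntImage

theorem exists_dvd_prod_pow_of_ne_zero {D : Type*} [CommRing D] [IsDomain D]
    [IsPrincipalIdealRing D] {d : D} (hd : d ≠ 0) :
    ∃ (P : Finset D) (m : D → ℕ), (∀ p ∈ P, Prime p) ∧
      ((P : Set D).Pairwise fun p q => IsCoprime (p ^ m p) (q ^ m q)) ∧ d ∣ ∏ p ∈ P, p ^ m p := by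
  classical
  let _ : StrongNormalizationMonoid D := UniqueFactorizationMonoid.strongNormalizationMonoid
  refine ⟨(normalizedFactors d).toFinset, (normalizedFactors d).count,
    fun p hp => prime_of_normalized_factor p (Multiset.mem_toFinset.1 hp),
    fun p hp q hq hpq => ?_, ?_⟩
  · rw [Finset.mem_coe, Multiset.mem_toFinset] at hp hq
    exact ((irreducible_of_normalized_factor p hp).coprime_iff_not_dvd.2
      fun h => hpq (normalizedFactors_eq_of_dvd d p hp q hq h)).pow
  · rw [← prod_multiset_count]
    exact (prod_normalizedFactors hd).symm.dvd

theorem stmt18_general {D : Type*} [CommRing D] [IsDomain D] [IsPrincipalIdealRing D]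
    (K : Type*) [Field K] [Algebra D K] [IsFractionRing D K]
    {n : ℕ} (A : Matrix (Fin n) (Fin n) D) :
    ∃ (P : Finset D) (m : D → ℕ) (ν : D → ℕ → Polynomial D)
      (W : D → ℕ → Matrix (Fin n) (Fin n) D),
      (∀ p ∈ P, Prime p) ∧
      (∀ p ∈ P, ν p 0 = 1) ∧
      (∀ p ∈ P, ∀ j, 1 ≤ j → IsMinPolyMod A (p ^ j) (ν p j)) ∧
      -- `W p j` is the matrix `ν_{(p,j)}(A)/p^j`:
      (∀ p ∈ P, ∀ j ∈ indexSet (ν p) (m p), p ^ j • W p j = Polynomial.aeval A (ν p j)) ∧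
      ({M : Matrix (Fin n) (Fin n) D |
          ∃ f : Polynomial K, IsIntValuedOn A f ∧
            M.map (algebraMap D K) = Polynomial.aeval (A.map (algebraMap D K)) f} =
        {M : Matrix (Fin n) (Fin n) D |
          ∃ (g : Polynomial D) (c : D → ℕ → Polynomial D),
            M = Polynomial.aeval A g +
              ∑ p ∈ P, ∑ j ∈ indexSet (ν p) (m p), W p j * Polynomial.aeval A (c p j)}) := by
  obtain ⟨d, hd, hdA⟩ := A.exists_ne_zero_forall_smul_mem_range (K := K)
  obtain ⟨P, m, hprime, hcop, e, he⟩ := exists_dvd_prod_pow_of_ne_zero hd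
  choose ν hν using fun (p : D) (j : ℕ) => exists_isMinPolyMod A (p ^ j)
  choose W hW using fun p j => (hν p j).2.1
  refine ⟨P, m, ν, W, hprime, fun p _ => (pow_zero p ▸ hν p 0).eq_one, fun p _ j _ => hν p j,
    fun p _ j _ => (hW p j).symm, ?_⟩
  rw [← A.coe_intImage, ← A.coe_aevalSpan_sigma, SetLike.coe_set_eq]
  refine le_antisymm (fun x hx => ?_) (Matrix.aevalSpan_le_intImage K
    (fun i hi => pow_ne_zero _ (hprime _ (mem_sigma.1 hi).1).ne_zero) fun i _ => ⟨_, (hW _ _).symm⟩)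
  have hPx : (∏ p ∈ P, p ^ m p) • x ∈ (aeval (R := D) A).range.toSubmodule := by
    rw [he, mul_comm, mul_smul]
    exact Submodule.smul_mem _ e (hdA x hx)
  refine Submodule.mem_of_prod_smul_mem hcop ?_ (fun p hp y hy => ?_) hPx
  · rintro _ ⟨g, rfl⟩
    exact A.aeval_mem_aevalSpan g
  · obtain ⟨g, hg⟩ := hy
    exact Matrix.aevalSpan_le_aevalSpan_sigma hp
      (mem_aevalSpan_of_pow_smul_eq_aeval (hprime p hp) (hν p) (fun j => (hW p j).symm) hg.symm)

/-- Let `D` be a PID with quotient field `K` and `A` a matrix over `D`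
with minimal polynomial `μ_A ∈ D[X]`. Then there are a finite set `P_A` of primes of `D`,
numbers `m_p`, `(p^j)`-minimal polynomials `ν_{(p,j)}` of `A`, and matrices
`W_{p,j} = ν_{(p,j)}(A)/p^j ∈ M_n(D)` such that the ring of images
`{f(A) : f ∈ Int(A, M_n(D))}` equals
`D[A] + Σ_{p ∈ P_A} Σ_{j ∈ I_A^{(p,m_p)}} (ν_{(p,j)}(A)/p^j)·D[A]` (as subsets of `M_n(D)`). -/
theorem stmt18 {D : Type*} [CommRing D] [IsDomain D] [IsPrincipalIdealRing D]
    (K : Type*) [Field K] [Algebra D K] [IsFractionRing D K]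
    {n : ℕ} (A : Matrix (Fin n) (Fin n) D)
    (μ : Polynomial D)
    (hμ : μ.map (algebraMap D K) = minpoly K (A.map (algebraMap D K))) :
    ∃ (P : Finset D) (m : D → ℕ) (ν : D → ℕ → Polynomial D)
      (W : D → ℕ → Matrix (Fin n) (Fin n) D),
      (∀ p ∈ P, Prime p) ∧
      (∀ p ∈ P, ν p 0 = 1) ∧
      (∀ p ∈ P, ∀ j, 1 ≤ j → IsMinPolyMod A (p ^ j) (ν p j)) ∧
      -- `W p j` is the matrix `ν_{(p,j)}(A)/p^j`:
      (∀ p ∈ P, ∀ j ∈ indexSet (ν p) (m p), p ^ j • W p j = Polynomial.aeval A (ν p j)) ∧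
      ({M : Matrix (Fin n) (Fin n) D |
          ∃ f : Polynomial K, IsIntValuedOn A f ∧
            M.map (algebraMap D K) = Polynomial.aeval (A.map (algebraMap D K)) f} =
        {M : Matrix (Fin n) (Fin n) D |
          ∃ (g : Polynomial D) (c : D → ℕ → Polynomial D),
            M = Polynomial.aeval A g +
              ∑ p ∈ P, ∑ j ∈ indexSet (ν p) (m p), W p j * Polynomial.aeval A (c p j)}) :=
  stmt18_general K A
end
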